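/- The map Exp : ℝ → (0,1), Exp(x) := e^{4x}/(1 + e^{4x}), is a group isomorphism from (ℝ, +) to the disparity group ((0,1), ∘): it is bijective onto (0,1) and satisfies Exp(x + y) = Exp(x) ∘ Exp(y) for all x, y ∈ ℝ. -/

import Mathlib

/-! `dExp` is the logistic sigmoid at `4x`, so it suffices to show that `σ` is a bijection
`ℝ → (0,1)` turning `+` into `∘`. The latter is a computation: writing `u = e^{-a}` and
`v = e^{-b}`, the denominator of `σ a ∘ σ b = (1 + u)⁻¹ (1 + v)⁻¹ / (1 - σ a - σ b + 2 σ a σ b)`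
collapses to `(1 + u v) / ((1 + u) (1 + v))`, leaving `(1 + u v)⁻¹ = σ (a + b)`. -/

noncomputable def dop (x y : ℝ) : ℝ := x * y / (1 - x - y + 2 * x * y)

noncomputable def dExp (x : ℝ) : ℝ := Real.exp (4 * x) / (1 + Real.exp (4 * x))

open Real Set

lemma sigmoid_add (a b : ℝ) : sigmoid (a + b) = dop (sigmoid a) (sigmoid b) := by
  have hu := exp_pos (-a)
  have hv := exp_pos (-b)
  have hden : 1 - sigmoid a - sigmoid b + 2 * sigmoid a * sigmoid b
      = (1 + exp (-a) * exp (-b)) / ((1 + exp (-a)) * (1 + exp (-b))) := by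
    simp only [sigmoid_def]
    field_simp
    ring
  rw [dop, hden, sigmoid_def, sigmoid_def, sigmoid_def, neg_add, exp_add]
  field_simp

lemma dExp_eq_sigmoid (x : ℝ) : dExp x = sigmoid (4 * x) := by
  have he := exp_pos (4 * x)
  rw [dExp, sigmoid_def, exp_neg]
  field_simp
  ring

lemma dExp_add (x y : ℝ) : dExp (x + y) = dop (dExp x) (dExp y) := by
  simp only [dExp_eq_sigmoid, mul_add, sigmoid_add]

lemma dExp_eq_sigmoid_comp : dExp = sigmoid ∘ (4 * ·) := funext dExp_eq_sigmoid

lemma dExp_injective : Function.Injective dExp := by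
  rw [dExp_eq_sigmoid_comp]
  exact sigmoid_injective.comp (mul_right_injective₀ four_ne_zero)

lemma range_dExp : range dExp = Ioo 0 1 := by
  rw [dExp_eq_sigmoid_comp, (mul_left_surjective₀ four_ne_zero).range_comp, range_sigmoid]

theorem dExp_iso :
    Set.BijOn dExp Set.univ (Set.Ioo (0:ℝ) 1) ∧
    (∀ x y : ℝ, dExp (x + y) = dop (dExp x) (dExp y)) := by
  refine ⟨?_, dExp_add⟩
  simpa only [image_univ, range_dExp] using dExp_injective.injOn.bijOn_image (s := univ)
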